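/- For every real η with 0 < η ≤ 0.33, the quantities K₁(η) = (3 − 2η + √(5 − 4η)) / (2(1 − η)) and K₃(η) = (3 − 9η + 2η² + √(−36η³ + 93η² − 54η + 9)) / (2η²) satisfy K₁(η) > 1 and K₃(η) > 1 / (1 − 1/K₁(η)). -/
import Mathlib


/-- The minimal cone expansion factor `K₁(η)` of the return-map matrix `M₁`. -/
noncomputable def K₁ (η : ℝ) : ℝ := (3 - 2*η + Real.sqrt (5 - 4*η)) / (2*(1 - η))

/-- The minimal cone expansion factor `K₃(η)` of the return-map matrix `M₃`. -/
noncomputable def K₃ (η : ℝ) : ℝ :=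
  (3 - 9*η + 2*η^2 + Real.sqrt (-36*η^3 + 93*η^2 - 54*η + 9)) / (2*η^2)

/-- Key algebraic inequality used for `stmt3`. -/
lemma stmt3_core (η s t : ℝ) (h0 : 0 < η) (h1 : η ≤ 0.33)
    (hsge : (1.9:ℝ) ≤ s)
    (ht2 : t^2 = -36*η^3 + 93*η^2 - 54*η + 9) (htpos : 0 < t) :
    3 - 9*η - 4*η^2 + 4*η^3 + (3 - 9*η)*s + t*(1+s) > 0 := by
  rcases le_or_gt η 0.3 with hc | hc
  · nlinarith [mul_nonneg htpos.le (by linarith : (0:ℝ) ≤ 1+s),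
      mul_nonneg (by linarith : (0:ℝ) ≤ s - 1.9) (by linarith : (0:ℝ) ≤ 3 - 9*η)]
  · have hb : 2.9 * t > 4*η^2*(1-η) - 8.7*(1-3*η) := by
      nlinarith [htpos, ht2, mul_pos htpos htpos, sq_nonneg (η - 0.33), sq_nonneg (η-0.3),
        mul_nonneg (mul_nonneg (by linarith : (0:ℝ) ≤ η - 0.3) (by linarith : (0:ℝ) ≤ 0.33 - η)) (by linarith : (0:ℝ) ≤ 0.33 - η),
        mul_nonneg (mul_nonneg (by linarith : (0:ℝ) ≤ η - 0.3) (by linarith : (0:ℝ) ≤ η - 0.3)) (by linarith : (0:ℝ) ≤ 0.33 - η)]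
    nlinarith [mul_nonneg (by linarith : (0:ℝ) ≤ s - 1.9) htpos.le,
      mul_nonneg (by linarith : (0:ℝ) ≤ s - 1.9) (by linarith : (0:ℝ) ≤ 3 - 9*η)]

/-- For `0 < η ≤ 0.33`, `K₁(η) > 1` and `K₃(η) > 1/(1 − 1/K₁(η))`. -/
theorem stmt3 (η : ℝ) (h0 : 0 < η) (h1 : η ≤ 0.33) :
    K₁ η > 1 ∧ K₃ η > 1 / (1 - 1 / K₁ η) := by
  have hs0 : (0:ℝ) ≤ 5 - 4*η := by nlinarith
  set s := Real.sqrt (5 - 4*η) with hsdef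
  have hs2 : s^2 = 5 - 4*η := Real.sq_sqrt hs0
  have hsnonneg : 0 ≤ s := Real.sqrt_nonneg _
  have hsge : (1.9:ℝ) ≤ s := by nlinarith
  have ht0 : (0:ℝ) < -36*η^3 + 93*η^2 - 54*η + 9 := by
    nlinarith [sq_nonneg η, mul_pos h0 h0]
  set t := Real.sqrt (-36*η^3 + 93*η^2 - 54*η + 9) with htdef
  have ht2 : t^2 = -36*η^3 + 93*η^2 - 54*η + 9 := Real.sq_sqrt ht0.le
  have htpos : 0 < t := Real.sqrt_pos.mpr ht0
  have hden : (0:ℝ) < 2*(1-η) := by nlinarith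
  have hnum : (0:ℝ) < 3 - 2*η + s := by nlinarith
  have h1s : (0:ℝ) < 1 + s := by linarith
  have hK1gt : K₁ η > 1 := by
    rw [show K₁ η = (3 - 2*η + s) / (2*(1 - η)) from rfl, gt_iff_lt, lt_div_iff₀ hden]
    nlinarith
  refine ⟨hK1gt, ?_⟩
  have heq : 1 / (1 - 1 / K₁ η) = (3 - 2*η + s) / (1 + s) := by
    show 1 / (1 - 1 / ((3 - 2*η + s) / (2*(1 - η)))) = _
    rw [one_div_div]
    have h2 : (1:ℝ) - 2*(1-η) / (3 - 2*η + s) = (1 + s) / (3 - 2*η + s) := by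
      field_simp; ring
    rw [h2, one_div_div]
  rw [heq, show K₃ η = (3 - 9*η + 2*η^2 + t) / (2*η^2) from rfl, gt_iff_lt,
    div_lt_div_iff₀ h1s (by positivity)]
  nlinarith [stmt3_core η s t h0 h1 hsge ht2 htpos]
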